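/- Let φ ∈ L_PAPAL and let M = (S, ∼, V) be an epistemic model on which the valuation of the atoms occurring in φ is constant (for every p ∈ v(φ), V(p) = ∅ or V(p) = S). Then M ⊨ φ or M ⊨ ¬φ, i.e., φ is true at every state of M or false at every state of M. -/
import Mathlib


/-- An epistemic (S5) model: a nonempty set of states, an equivalence
relation for each agent, and a valuation of atoms. -/
structure EpiModel (A P : Type) where
  S : Type
  ne : Nonempty S
  rel : A → S → S → Prop
  equiv : ∀ a, Equivalence (rel a)
  val : P → Set S

/-- Positive formulas L_EL⁺ : p | ¬p | ∧ | ∨ | K_a. -/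
inductive PosForm (A P : Type) where
  | atom : P → PosForm A P
  | natom : P → PosForm A P
  | and : PosForm A P → PosForm A P → PosForm A P
  | or : PosForm A P → PosForm A P → PosForm A P
  | know : A → PosForm A P → PosForm A P

/-- Satisfaction of a positive formula, relativized to a current domain `D`
(representing the submodel of `M` induced by `D`). -/
def PosForm.sat {A P : Type} (M : EpiModel A P) : PosForm A P → Set M.S → M.S → Prop
  | .atom p, _, s => s ∈ M.val p
  | .natom p, _, s => s ∉ M.val p
  | .and φ ψ, D, s => PosForm.sat M φ D s ∧ PosForm.sat M ψ D s
  | .or φ ψ, D, s => PosForm.sat M φ D s ∨ PosForm.sat M ψ D s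
  | .know a φ, D, s => ∀ t, M.rel a s t → t ∈ D → PosForm.sat M φ D t

/-- The language L_PAPAL : atoms, ¬, ∧, K_a, announcements [ψ]φ and the
positive arbitrary-announcement quantifier □⁺. -/
inductive Form (A P : Type) where
  | atom : P → Form A P
  | neg : Form A P → Form A P
  | and : Form A P → Form A P → Form A P
  | know : A → Form A P → Form A P
  | ann : Form A P → Form A P → Form A P
  | pbox : Form A P → Form A P

/-- Satisfaction, relativized to a current domain `D`: `Form.sat M φ D s`
means that φ holds at state `s` of the restriction of `M` to `D`.
Announcement `[ψ]φ` further restricts the domain to the states of `D`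
satisfying ψ; `□⁺φ` quantifies over announcements of positive formulas. -/
def Form.sat {A P : Type} (M : EpiModel A P) : Form A P → Set M.S → M.S → Prop
  | .atom p, _, s => s ∈ M.val p
  | .neg φ, D, s => ¬ Form.sat M φ D s
  | .and φ ψ, D, s => Form.sat M φ D s ∧ Form.sat M ψ D s
  | .know a φ, D, s => ∀ t, M.rel a s t → t ∈ D → Form.sat M φ D t
  | .ann ψ φ, D, s => Form.sat M ψ D s → Form.sat M φ {t | t ∈ D ∧ Form.sat M ψ D t} s
  | .pbox φ, D, s => ∀ χ : PosForm A P, PosForm.sat M χ D s →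
      Form.sat M φ {t | t ∈ D ∧ PosForm.sat M χ D t} s

/-- Truth at a pointed model `M_s`. -/
def Sat {A P : Type} (M : EpiModel A P) (s : M.S) (φ : Form A P) : Prop :=
  Form.sat M φ Set.univ s

def Form.or {A P : Type} (φ ψ : Form A P) : Form A P := .neg (.and (.neg φ) (.neg ψ))
def Form.imp {A P : Type} (φ ψ : Form A P) : Form A P := Form.or (.neg φ) ψ
def Form.iff {A P : Type} (φ ψ : Form A P) : Form A P := .and (Form.imp φ ψ) (Form.imp ψ φ)
def Form.pdia {A P : Type} (φ : Form A P) : Form A P := .neg (.pbox (.neg φ))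
def Form.lknow {A P : Type} (a : A) (φ : Form A P) : Form A P := .neg (.know a (.neg φ))

/-- Validity on the class S5 of all epistemic models. -/
def Valid (A P : Type) (φ : Form A P) : Prop :=
  ∀ (M : EpiModel A P) (s : M.S), Sat M s φ

/-- The set of propositional atoms occurring in a formula. -/
def Form.vars {A P : Type} : Form A P → Set P
  | .atom p => {p}
  | .neg φ => Form.vars φ
  | .and φ ψ => Form.vars φ ∪ Form.vars ψ
  | .know _ φ => Form.vars φ
  | .ann φ ψ => Form.vars φ ∪ Form.vars ψ
  | .pbox φ => Form.vars φ


/-- Every positive formula contains an atom. -/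
def PosForm.getAtom {A P : Type} : PosForm A P → P
  | .atom p => p
  | .natom p => p
  | .and φ _ => PosForm.getAtom φ
  | .or φ _ => PosForm.getAtom φ
  | .know _ φ => PosForm.getAtom φ

/-- Key lemma: if all atoms of φ have constant valuation, then the truth
value of φ at a state of any subdomain is the same for all subdomains and
member states. -/
theorem key_dichotomy {A P : Type} (M : EpiModel A P) (φ : Form A P)
    (hconst : ∀ p ∈ Form.vars φ, M.val p = ∅ ∨ M.val p = Set.univ) :
    (∀ (D : Set M.S) (s : M.S), s ∈ D → Form.sat M φ D s) ∨
    (∀ (D : Set M.S) (s : M.S), s ∈ D → ¬ Form.sat M φ D s) := by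
  induction φ with
  | atom p =>
    rcases hconst p (by simp [Form.vars]) with h | h
    · right; intro D s _ hsat
      simp only [Form.sat, h] at hsat; exact hsat
    · left; intro D s _
      simp [Form.sat, h]
  | neg φ ih =>
    rcases ih hconst with h | h
    · right; intro D s hs hsat; exact hsat (h D s hs)
    · left; intro D s hs; exact h D s hs
  | and φ ψ ihφ ihψ =>
    have hφ := ihφ (fun p hp => hconst p (Or.inl hp))
    have hψ := ihψ (fun p hp => hconst p (Or.inr hp))
    rcases hφ with hφ | hφ
    · rcases hψ with hψ | hψ
      · left; intro D s hs; exact ⟨hφ D s hs, hψ D s hs⟩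
      · right; intro D s hs hsat; exact hψ D s hs hsat.2
    · right; intro D s hs hsat; exact hφ D s hs hsat.1
  | know a φ ih =>
    rcases ih hconst with h | h
    · left; intro D s _ t _ ht; exact h D t ht
    · right; intro D s hs hsat
      exact h D s hs (hsat s ((M.equiv a).refl s) hs)
  | ann ψ φ ihψ ihφ =>
    have hψ := ihψ (fun p hp => hconst p (Or.inl hp))
    have hφ := ihφ (fun p hp => hconst p (Or.inr hp))
    rcases hψ with hψ | hψ
    · rcases hφ with hφ | hφ
      · left; intro D s hs hsψ
        exact hφ {t | t ∈ D ∧ Form.sat M ψ D t} s ⟨hs, hsψ⟩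
      · right; intro D s hs hsat
        exact hφ {t | t ∈ D ∧ Form.sat M ψ D t} s ⟨hs, hψ D s hs⟩ (hsat (hψ D s hs))
    · left; intro D s hs hsψ; exact absurd hsψ (hψ D s hs)
  | pbox φ ih =>
    rcases ih hconst with h | h
    · left; intro D s hs χ hχ
      exact h {t | t ∈ D ∧ PosForm.sat M χ D t} s ⟨hs, hχ⟩
    · by_cases hP : Nonempty P
      · obtain ⟨p⟩ := hP
        right; intro D s hs hsat
        have hχ : PosForm.sat M (.or (.atom p) (.natom p)) D s := by
          simp only [PosForm.sat]; exact Classical.em _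
        exact h {t | t ∈ D ∧ PosForm.sat M (.or (.atom p) (.natom p)) D t} s ⟨hs, hχ⟩ (hsat _ hχ)
      · left; intro D s hs χ _
        exact absurd ⟨χ.getAtom⟩ hP

/-- If the valuation of every atom occurring in φ is constant
on `M` (empty or the whole domain), then φ is true at every state of `M` or
false at every state of `M`. -/
theorem constant_valuation_dichotomy
    (A P : Type) (φ : Form A P) (M : EpiModel A P)
    (hconst : ∀ p ∈ Form.vars φ, M.val p = ∅ ∨ M.val p = Set.univ) :
    (∀ s : M.S, Sat M s φ) ∨ (∀ s : M.S, ¬ Sat M s φ) := by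
  rcases key_dichotomy M φ hconst with h | h
  · exact Or.inl fun s => h Set.univ s trivial
  · exact Or.inr fun s => h Set.univ s trivial
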